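/- arXiv:2412.17795 — 2 statements merged into one kernel-verified Lean document; each statement's English description precedes it below -/
import Mathlib

section
/- The index of Γ₀(n) in SL₂(ℤ) equals n·∏_{p | n} (1 + 1/p), where the product runs over primes p dividing n. -/
open Matrix Matrix.SpecialLinearGroup CongruenceSubgroup MulAction
open scoped MatrixGroups

namespace Gamma0Aux

/-- If `gcd a b` is coprime to `n` and `b ≠ 0`, we can shift `a` by a multiple of `n`
to make it coprime to `b`. -/
lemma exists_add_mul_coprime {a b n : ℕ} (hb : b ≠ 0) (h : Nat.Coprime (Nat.gcd a b) n) :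
    ∃ k : ℕ, Nat.Coprime (a + k * n) b := by
  let ps := b.primeFactors.filter (fun p ↦ ¬p ∣ a)
  use ps.prod id
  apply Nat.coprime_of_dvd
  intro p pp hp hpb
  by_cases hpa : p ∣ a
  · have h2 : p ∣ ps.prod id * n := (Nat.dvd_add_right hpa).mp hp
    rcases pp.dvd_mul.mp h2 with h3 | h3
    · have ⟨q, hq, hq'⟩ := (pp.prime.dvd_finset_prod_iff id).mp h3
      rw [Finset.mem_filter] at hq
      rw [(Nat.prime_dvd_prime_iff_eq pp (Nat.prime_of_mem_primeFactors hq.1)).mp hq'] at hpa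
      exact hq.2 hpa
    · have : p ∣ Nat.gcd (Nat.gcd a b) n := Nat.dvd_gcd (Nat.dvd_gcd hpa hpb) h3
      rw [h] at this
      exact pp.one_lt.ne' (Nat.eq_one_of_dvd_one this)
  · have pps : p ∈ ps := Finset.mem_filter.mpr ⟨Nat.mem_primeFactors.mpr ⟨pp, hpb, hb⟩, hpa⟩
    have : p ∣ ps.prod id * n := Dvd.dvd.mul_right (Finset.dvd_prod_of_mem id pps) n
    exact hpa ((Nat.dvd_add_right this).mp (by rwa [add_comm]))

/-- If `c d : ZMod n` are coprime, then `gcd (c.val) (d.val)` is coprime to `n`. -/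
lemma gcd_val_coprime {n : ℕ} [NeZero n] {c d : ZMod n} (h : IsCoprime c d) :
    Nat.Coprime (Nat.gcd c.val d.val) n := by
  obtain ⟨x, y, hxy⟩ := h
  set g := Nat.gcd (Nat.gcd c.val d.val) n with hg
  have hgn : g ∣ n := Nat.gcd_dvd_right _ _
  have hgc : g ∣ c.val := dvd_trans (Nat.gcd_dvd_left _ _) (Nat.gcd_dvd_left _ _)
  have hgd : g ∣ d.val := dvd_trans (Nat.gcd_dvd_left _ _) (Nat.gcd_dvd_right _ _)
  have hc : (ZMod.castHom hgn (ZMod g)) c = 0 := by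
    rw [ZMod.castHom_apply, ← ZMod.natCast_val, ZMod.natCast_eq_zero_iff]
    exact hgc
  have hd2 : (ZMod.castHom hgn (ZMod g)) d = 0 := by
    rw [ZMod.castHom_apply, ← ZMod.natCast_val, ZMod.natCast_eq_zero_iff]
    exact hgd
  have h1 : (1 : ZMod g) = 0 := by
    have := congrArg (ZMod.castHom hgn (ZMod g)) hxy
    rw [map_add, _root_.map_mul, _root_.map_mul, _root_.map_one, hc, hd2, mul_zero, mul_zero, add_zero] at this
    exact this.symm
  have : g ∣ 1 := by
    rw [← Nat.cast_one (R := ZMod g), ZMod.natCast_eq_zero_iff] at h1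
    exact h1
  have : Nat.gcd (Nat.gcd c.val d.val) n = 1 := Nat.eq_one_of_dvd_one (hg ▸ this)
  exact this

/-- Key lifting lemma: any coprime pair mod `n` is the first column of some `SL(2, ℤ)` matrix. -/
lemma exists_SL2_lift (n : ℕ) [NeZero n] {c d : ZMod n} (h : IsCoprime c d) :
    ∃ A : SL(2, ℤ), ((A 0 0 : ℤ) : ZMod n) = c ∧ ((A 1 0 : ℤ) : ZMod n) = d := by
  have hgcd := gcd_val_coprime h
  have hc' : ((c.val : ℤ) : ZMod n) = c := by
    rw [Int.cast_natCast, ZMod.natCast_val, ZMod.cast_id]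
  have hd' : ((d.val : ℤ) : ZMod n) = d := by
    rw [Int.cast_natCast, ZMod.natCast_val, ZMod.cast_id]
  by_cases hb : d.val = 0
  · -- d = 0, so c.val is coprime to n; use column (c.val, n)
    have hd0 : d = 0 := by rw [← hd', hb]; simp
    rw [hb, Nat.gcd_zero_right] at hgcd
    have hcop : IsCoprime (c.val : ℤ) (n : ℤ) := by
      rw [Int.isCoprime_iff_gcd_eq_one, Int.gcd_natCast_natCast]
      exact hgcd
    obtain ⟨A, hA1, hA2⟩ := hcop.exists_SL2_col 0
    exact ⟨A, by rw [hA1]; exact hc', by rw [hA2]; simp [hd0]⟩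
  · obtain ⟨k, hk⟩ := exists_add_mul_coprime hb hgcd
    have hcop : IsCoprime ((c.val + k * n : ℕ) : ℤ) ((d.val : ℕ) : ℤ) := by
      rw [Int.isCoprime_iff_gcd_eq_one, Int.gcd_natCast_natCast]
      exact hk
    obtain ⟨A, hA1, hA2⟩ := hcop.exists_SL2_col 0
    refine ⟨A, ?_, by rw [hA2]; exact hd'⟩
    rw [hA1]
    push_cast
    simp [hc']

/-- The set of coprime (unimodular) pairs in `(ZMod n)²`. -/
abbrev US (n : ℕ) := {v : ZMod n × ZMod n // IsCoprime v.1 v.2}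

instance (n : ℕ) : SMul (ZMod n)ˣ (US n) :=
  ⟨fun u v => ⟨((u : ZMod n) * v.1.1, (u : ZMod n) * v.1.2), by
    obtain ⟨x, y, hxy⟩ := v.2
    exact ⟨x * (u⁻¹ : (ZMod n)ˣ), y * (u⁻¹ : (ZMod n)ˣ), by
      have : ((u⁻¹ : (ZMod n)ˣ) : ZMod n) * (u : ZMod n) = 1 := u.inv_mul
      calc x * (u⁻¹ : (ZMod n)ˣ) * ((u : ZMod n) * v.1.1)
          + y * (u⁻¹ : (ZMod n)ˣ) * ((u : ZMod n) * v.1.2)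
          = ((u⁻¹ : (ZMod n)ˣ) * (u : ZMod n)) * (x * v.1.1 + y * v.1.2) := by ring
        _ = 1 := by rw [this, hxy, one_mul]⟩⟩⟩

lemma smul_fst {n : ℕ} (u : (ZMod n)ˣ) (v : US n) : (u • v).1.1 = (u : ZMod n) * v.1.1 := rfl
lemma smul_snd {n : ℕ} (u : (ZMod n)ˣ) (v : US n) : (u • v).1.2 = (u : ZMod n) * v.1.2 := rfl

instance (n : ℕ) : MulAction (ZMod n)ˣ (US n) where
  one_smul v := Subtype.ext (Prod.ext (by rw [smul_fst]; simp) (by rw [smul_snd]; simp))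
  mul_smul u w v := Subtype.ext (Prod.ext
    (by rw [smul_fst, smul_fst, smul_fst]; push_cast; ring)
    (by rw [smul_snd, smul_snd, smul_snd]; push_cast; ring))

/-- The projective line over `ZMod n`, as the quotient of unimodular pairs by the unit action. -/
abbrev P1 (n : ℕ) := MulAction.orbitRel.Quotient (ZMod n)ˣ (US n)

lemma stabilizer_eq_bot (n : ℕ) (v : US n) : MulAction.stabilizer (ZMod n)ˣ v = ⊥ := by
  ext u
  simp only [MulAction.mem_stabilizer_iff, Subgroup.mem_bot]
  constructor
  · intro hu
    obtain ⟨x, y, hxy⟩ := v.2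
    have h1 : (u : ZMod n) * v.1.1 = v.1.1 := by
      conv_rhs => rw [← hu, smul_fst]
    have h2 : (u : ZMod n) * v.1.2 = v.1.2 := by
      conv_rhs => rw [← hu, smul_snd]
    ext
    calc (u : ZMod n) = (u : ZMod n) * (x * v.1.1 + y * v.1.2) := by rw [hxy, mul_one]
      _ = x * ((u : ZMod n) * v.1.1) + y * ((u : ZMod n) * v.1.2) := by ring
      _ = x * v.1.1 + y * v.1.2 := by rw [h1, h2]
      _ = 1 := hxy
  · rintro rfl; exact one_smul _ _

/-- Counting: `|US n| = |P1 n| * |(ZMod n)ˣ|`. -/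
noncomputable def usEquivP1Prod (n : ℕ) : US n ≃ P1 n × (ZMod n)ˣ :=
  (MulAction.selfEquivSigmaOrbits (ZMod n)ˣ (US n)).trans <|
    (Equiv.sigmaCongrRight fun ω =>
      (MulAction.orbitEquivQuotientStabilizer (ZMod n)ˣ (Quotient.out ω)).trans <|
        ((Subgroup.quotientEquivOfEq (stabilizer_eq_bot n _)).trans
          (QuotientGroup.quotientBot (G := (ZMod n)ˣ)).toEquiv)).trans <|
    Equiv.sigmaEquivProd (P1 n) (ZMod n)ˣ

/-- The unimodular pair attached to the first column of `g`. -/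
def toUS (n : ℕ) (g : SL(2, ℤ)) : US n :=
  ⟨(((g 0 0 : ℤ) : ZMod n), ((g 1 0 : ℤ) : ZMod n)),
    by simpa using (isCoprime_col g 0).map (Int.castRingHom (ZMod n))⟩
lemma toUS_rel (n : ℕ) (a b : SL(2, ℤ)) (h : a⁻¹ * b ∈ Gamma0 n) :
    (⟦toUS n a⟧ : P1 n) = ⟦toUS n b⟧ := by
  set γ := a⁻¹ * b with hγ
  have hb : b = a * γ := by rw [hγ]; group
  have hγ10 : ((γ 1 0 : ℤ) : ZMod n) = 0 := Gamma0_mem.mp h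
  -- γ 0 0 is a unit mod n
  have hdet : ((γ 0 0 : ℤ) : ZMod n) * ((γ 1 1 : ℤ) : ZMod n) = 1 := by
    have hd := γ.2
    rw [Matrix.det_fin_two] at hd
    have : (((γ 0 0 * γ 1 1 - γ 0 1 * γ 1 0 : ℤ)) : ZMod n) = 1 := by rw [hd]; simp
    push_cast at this
    rw [hγ10, mul_zero, sub_zero] at this
    exact this
  set u : (ZMod n)ˣ := ⟨((γ 0 0 : ℤ) : ZMod n), ((γ 1 1 : ℤ) : ZMod n), hdet,
    by rw [mul_comm] at hdet; exact hdet⟩ with hu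
  have key : toUS n b = u • toUS n a := by
    apply Subtype.ext
    apply Prod.ext
    · rw [smul_fst]
      show ((b 0 0 : ℤ) : ZMod n) = _
      have e : (b : Matrix (Fin 2) (Fin 2) ℤ) 0 0 = a 0 0 * γ 0 0 + a 0 1 * γ 1 0 := by
        rw [hb]; exact (Matrix.two_mul_expl (a : Matrix (Fin 2) (Fin 2) ℤ) γ).1
      rw [e]
      push_cast
      rw [hγ10, mul_zero, add_zero]
      show _ = ((γ 0 0 : ℤ) : ZMod n) * ((a 0 0 : ℤ) : ZMod n)
      ring
    · rw [smul_snd]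
      show ((b 1 0 : ℤ) : ZMod n) = _
      have e : (b : Matrix (Fin 2) (Fin 2) ℤ) 1 0 = a 1 0 * γ 0 0 + a 1 1 * γ 1 0 := by
        rw [hb]; exact (Matrix.two_mul_expl (a : Matrix (Fin 2) (Fin 2) ℤ) γ).2.2.1
      rw [e]
      push_cast
      rw [hγ10, mul_zero, add_zero]
      show _ = ((γ 0 0 : ℤ) : ZMod n) * ((a 1 0 : ℤ) : ZMod n)
      ring
  have hmem : toUS n a ∈ MulAction.orbit (ZMod n)ˣ (toUS n b) :=
    MulAction.mem_orbit_iff.mpr ⟨u⁻¹, by rw [key, inv_smul_smul]⟩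
  exact Quotient.sound hmem

lemma mem_Gamma0_of_rel (n : ℕ) (a b : SL(2, ℤ)) (u : (ZMod n)ˣ)
    (h : u • toUS n b = toUS n a) : a⁻¹ * b ∈ Gamma0 n := by
  have h1 : (u : ZMod n) * ((b 0 0 : ℤ) : ZMod n) = ((a 0 0 : ℤ) : ZMod n) := by
    have := congrArg (fun v : US n => v.1.1) h
    simpa [smul_fst, toUS] using this
  have h2 : (u : ZMod n) * ((b 1 0 : ℤ) : ZMod n) = ((a 1 0 : ℤ) : ZMod n) := by
    have := congrArg (fun v : US n => v.1.2) h
    simpa [smul_snd, toUS] using this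
  rw [Gamma0_mem]
  have einv : ((a⁻¹ : SL(2, ℤ)) : Matrix (Fin 2) (Fin 2) ℤ)
      = ![![a 1 1, -(a 0 1)], ![-(a 1 0), a 0 0]] := by rw [SL2_inv_expl a]
  have e : ((a⁻¹ * b : SL(2, ℤ)) : Matrix (Fin 2) (Fin 2) ℤ) 1 0
      = -(a 1 0) * b 0 0 + a 0 0 * b 1 0 := by
    rw [Matrix.SpecialLinearGroup.coe_mul,
      (Matrix.two_mul_expl ((a⁻¹ : SL(2, ℤ)) : Matrix (Fin 2) (Fin 2) ℤ)
        (b : Matrix (Fin 2) (Fin 2) ℤ)).2.2.1, einv]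
    simp
  show (((a⁻¹ * b : SL(2, ℤ)) : Matrix (Fin 2) (Fin 2) ℤ) 1 0 : ZMod n) = 0
  rw [e]
  push_cast
  rw [← h1, ← h2]
  ring

/-- The coset space `SL(2, ℤ) ⧸ Γ₀(n)` is in bijection with `P1 n`. -/
noncomputable def quotEquivP1 (n : ℕ) [NeZero n] : (SL(2, ℤ) ⧸ Gamma0 n) ≃ P1 n := by
  refine Equiv.ofBijective
    (fun q => Quotient.liftOn' q (fun g => (⟦toUS n g⟧ : P1 n)) ?_) ⟨?_, ?_⟩
  · intro a b hab
    rw [QuotientGroup.leftRel_apply] at hab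
    exact toUS_rel n a b hab
  · intro q1 q2
    refine Quotient.inductionOn₂' q1 q2 (fun a b h => ?_)
    have h' : (⟦toUS n a⟧ : P1 n) = ⟦toUS n b⟧ := h
    obtain ⟨u, hu⟩ := Quotient.exact h'
    apply Quotient.sound'
    rw [QuotientGroup.leftRel_apply]
    exact mem_Gamma0_of_rel n a b u hu
  · intro q
    refine Quotient.inductionOn q (fun v => ?_)
    obtain ⟨A, hA1, hA2⟩ := exists_SL2_lift n v.2
    refine ⟨QuotientGroup.mk A, ?_⟩
    show (⟦toUS n A⟧ : P1 n) = ⟦v⟧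
    congr 1
    exact Subtype.ext (Prod.ext hA1 hA2)
/-- The fundamental counting identity. -/
lemma card_US_eq (n : ℕ) [NeZero n] :
    Nat.card (US n) = (Gamma0 n).index * n.totient := by
  have h1 : Nat.card (US n) = Nat.card (P1 n) * Nat.card (ZMod n)ˣ := by
    rw [Nat.card_congr (usEquivP1Prod n), Nat.card_prod]
  have h2 : Nat.card (P1 n) = (Gamma0 n).index := by
    rw [Subgroup.index, Nat.card_congr (quotEquivP1 n)]
  have h3 : Nat.card (ZMod n)ˣ = n.totient := by
    rw [Nat.card_eq_fintype_card, ZMod.card_units_eq_totient]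
  rw [h1, h2, h3]

/-- CRT: `US (a*b) ≃ US a × US b` for coprime `a b`. -/
def usEquivProd {a b : ℕ} (h : a.Coprime b) : US (a * b) ≃ US a × US b := by
  let e := ZMod.chineseRemainder h
  refine ⟨fun v => ⟨⟨((e v.1.1).1, (e v.1.2).1),
      v.2.map ((RingHom.fst (ZMod a) (ZMod b)).comp e.toRingHom)⟩,
    ⟨((e v.1.1).2, (e v.1.2).2),
      v.2.map ((RingHom.snd (ZMod a) (ZMod b)).comp e.toRingHom)⟩⟩,
    fun w => ⟨(e.symm (w.1.1.1, w.2.1.1), e.symm (w.1.1.2, w.2.1.2)), ?_⟩, ?_, ?_⟩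
  · obtain ⟨x1, y1, h1⟩ := w.1.2
    obtain ⟨x2, y2, h2⟩ := w.2.2
    have : IsCoprime ((w.1.1.1, w.2.1.1) : ZMod a × ZMod b) (w.1.1.2, w.2.1.2) :=
      ⟨(x1, x2), (y1, y2), Prod.ext h1 h2⟩
    exact this.map e.symm.toRingHom
  · intro v
    apply Subtype.ext
    apply Prod.ext <;> simp
  · intro w
    refine Prod.ext (Subtype.ext (Prod.ext ?_ ?_)) (Subtype.ext (Prod.ext ?_ ?_)) <;> simp
/-- Units of a monoid are equivalent to the subtype of unit elements. -/
noncomputable def unitsEquivSubtype (M : Type*) [Monoid M] : Mˣ ≃ {x : M // IsUnit x} where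
  toFun u := ⟨u, u.isUnit⟩
  invFun x := x.2.unit
  left_inv u := Units.ext (IsUnit.unit_spec u.isUnit)
  right_inv x := Subtype.ext (IsUnit.unit_spec x.2)

lemma isUnit_iff_val_coprime {q : ℕ} [NeZero q] (c : ZMod q) :
    IsUnit c ↔ Nat.Coprime c.val q := by
  have := ZMod.isUnit_iff_coprime c.val q
  rwa [ZMod.natCast_val, ZMod.cast_id] at this

lemma unit_dichotomy {p m : ℕ} (hp : p.Prime) {c d : ZMod (p ^ (m + 1))}
    (h : IsCoprime c d) : IsUnit c ∨ IsUnit d := by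
  haveI : NeZero (p ^ (m + 1)) := ⟨pow_ne_zero _ hp.pos.ne'⟩
  by_contra hcon
  push_neg at hcon
  obtain ⟨hc, hd⟩ := hcon
  rw [isUnit_iff_val_coprime] at hc hd
  have hpc : p ∣ c.val := by
    by_contra hpc
    exact hc ((Nat.Coprime.pow_right _ ((hp.coprime_iff_not_dvd).mpr hpc).symm))
  have hpd : p ∣ d.val := by
    by_contra hpd
    exact hd ((Nat.Coprime.pow_right _ ((hp.coprime_iff_not_dvd).mpr hpd).symm))
  have hgcd := gcd_val_coprime h
  have hpg : p ∣ Nat.gcd (Nat.gcd c.val d.val) (p ^ (m + 1)) :=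
    Nat.dvd_gcd (Nat.dvd_gcd hpc hpd) (dvd_pow_self p (Nat.succ_ne_zero m))
  rw [hgcd] at hpg
  exact hp.one_lt.ne' (Nat.eq_one_of_dvd_one hpg)

open scoped Classical in
lemma card_US_prime_pow {p : ℕ} (hp : p.Prime) (m : ℕ) :
    Nat.card (US (p ^ (m + 1))) = (p ^ (m + 1)) ^ 2 - (p ^ m) ^ 2 := by
  haveI : NeZero (p ^ (m + 1)) := ⟨pow_ne_zero _ hp.pos.ne'⟩
  set q := p ^ (m + 1) with hq
  have hiff : ∀ v : ZMod q × ZMod q,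
      IsCoprime v.1 v.2 ↔ ¬(¬IsUnit v.1 ∧ ¬IsUnit v.2) := by
    intro v
    constructor
    · intro h hcon
      rcases unit_dichotomy hp h with h' | h'
      · exact hcon.1 h'
      · exact hcon.2 h'
    · intro h
      rcases or_iff_not_and_not.mpr h with h' | h'
      · obtain ⟨u, hu⟩ := h'
        exact ⟨(u⁻¹ : (ZMod q)ˣ), 0, by simp [← hu]⟩
      · obtain ⟨u, hu⟩ := h'
        exact (isCoprime_comm.mp ⟨(u⁻¹ : (ZMod q)ˣ), 0, by simp [← hu]⟩)
  have cardNU : Fintype.card {x : ZMod q // ¬ IsUnit x} = p ^ m := by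
    rw [Fintype.card_subtype_compl, ZMod.card,
      Fintype.card_congr (unitsEquivSubtype (ZMod q)).symm, ZMod.card_units_eq_totient,
      hq, Nat.totient_prime_pow_succ hp, pow_succ, ← Nat.mul_sub]
    have hp0 := hp.pos
    have hp1 : p - (p - 1) = 1 := by omega
    rw [hp1, mul_one]
  calc Nat.card (US q)
      = Fintype.card {v : ZMod q × ZMod q // ¬(¬IsUnit v.1 ∧ ¬IsUnit v.2)} := by
        rw [Nat.card_congr (Equiv.subtypeEquivRight hiff), Nat.card_eq_fintype_card]
    _ = Fintype.card (ZMod q × ZMod q)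
        - Fintype.card {v : ZMod q × ZMod q // ¬IsUnit v.1 ∧ ¬IsUnit v.2} :=
        Fintype.card_subtype_compl _
    _ = q ^ 2 - (p ^ m) ^ 2 := by
        rw [Fintype.card_congr (Equiv.subtypeProdEquivProd
          (p := fun x : ZMod q => ¬IsUnit x) (q := fun x : ZMod q => ¬IsUnit x)),
          Fintype.card_prod, Fintype.card_prod, ZMod.card, cardNU, pow_two, pow_two]
lemma index_one : (Gamma0 1).index = 1 := by
  have h : Gamma0 1 = ⊤ := by
    ext A
    simp [Gamma0_mem, eq_iff_true_of_subsingleton]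
  rw [h, Subgroup.index_top]

lemma index_prime_pow {p : ℕ} (hp : p.Prime) (m : ℕ) :
    (((Gamma0 (p ^ (m + 1))).index : ℚ)) =
      ((p ^ (m + 1) : ℕ) : ℚ) * ∏ q ∈ (p ^ (m + 1)).primeFactors, (1 + (q : ℚ)⁻¹) := by
  haveI : NeZero (p ^ (m + 1)) := ⟨pow_ne_zero _ hp.pos.ne'⟩
  have hcard := card_US_eq (p ^ (m + 1))
  rw [card_US_prime_pow hp m] at hcard
  have hle : (p ^ m) ^ 2 ≤ (p ^ (m + 1)) ^ 2 :=
    Nat.pow_le_pow_left (Nat.pow_le_pow_right hp.pos (Nat.le_succ m)) 2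
  have hφpos : 0 < (p ^ (m + 1)).totient := Nat.totient_pos.mpr (pow_pos hp.pos _)
  have hφQ : (((p ^ (m + 1)).totient : ℕ) : ℚ) ≠ 0 := Nat.cast_ne_zero.mpr hφpos.ne'
  have hcast : (((Gamma0 (p ^ (m + 1))).index : ℕ) : ℚ) * (((p ^ (m + 1)).totient : ℕ) : ℚ)
      = ((p : ℚ) ^ (m + 1)) ^ 2 - ((p : ℚ) ^ m) ^ 2 := by
    rw [← Nat.cast_mul, ← hcard, Nat.cast_sub hle]
    push_cast
    ring
  rw [Nat.primeFactors_prime_pow (Nat.succ_ne_zero m) hp, Finset.prod_singleton]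
  apply mul_right_cancel₀ hφQ
  rw [hcast]
  have hφ : (((p ^ (m + 1)).totient : ℕ) : ℚ) = (p : ℚ) ^ m * ((p : ℚ) - 1) := by
    rw [Nat.totient_prime_pow_succ hp]
    push_cast [Nat.cast_sub hp.one_le]
    ring
  rw [hφ]
  have hp0 : (p : ℚ) ≠ 0 := Nat.cast_ne_zero.mpr hp.pos.ne'
  field_simp
  push_cast
  ring

lemma index_mul {a b : ℕ} (ha : 0 < a) (hb : 0 < b) (hab : a.Coprime b) :
    (Gamma0 (a * b)).index = (Gamma0 a).index * (Gamma0 b).index := by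
  haveI : NeZero a := ⟨ha.ne'⟩
  haveI : NeZero b := ⟨hb.ne'⟩
  haveI : NeZero (a * b) := ⟨by positivity⟩
  have h4 : Nat.card (US (a * b)) = Nat.card (US a) * Nat.card (US b) := by
    rw [Nat.card_congr (usEquivProd hab), Nat.card_prod]
  have hφpos : 0 < (a * b).totient := Nat.totient_pos.mpr (by positivity)
  apply Nat.eq_of_mul_eq_mul_right hφpos
  calc (Gamma0 (a * b)).index * (a * b).totient
      = Nat.card (US (a * b)) := (card_US_eq (a * b)).symm
    _ = Nat.card (US a) * Nat.card (US b) := h4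
    _ = ((Gamma0 a).index * a.totient) * ((Gamma0 b).index * b.totient) := by
        rw [card_US_eq a, card_US_eq b]
    _ = (Gamma0 a).index * (Gamma0 b).index * (a.totient * b.totient) := by ring
    _ = (Gamma0 a).index * (Gamma0 b).index * (a * b).totient := by
        rw [Nat.totient_mul hab]

end Gamma0Aux

/-- The index of `Γ₀(n)` in `SL₂(ℤ)` equals `n · ∏_{p ∣ n} (1 + 1/p)`. -/
theorem Gamma0_index (n : ℕ) (hn : 0 < n) :
    ((CongruenceSubgroup.Gamma0 n).index : ℚ) =
      (n : ℚ) * ∏ p ∈ n.primeFactors, (1 + (p : ℚ)⁻¹) := by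
  revert hn
  induction n using Nat.recOnPosPrimePosCoprime with
  | prime_pow p k pp hk =>
      intro _
      obtain ⟨m, rfl⟩ : ∃ m, k = m + 1 := ⟨k - 1, by omega⟩
      have := Gamma0Aux.index_prime_pow pp m
      exact_mod_cast this
  | zero => intro h; exact absurd h (lt_irrefl 0)
  | one =>
      intro _
      rw [Gamma0Aux.index_one]
      simp
  | coprime a b ha hb hab iha ihb =>
      intro _
      rw [Gamma0Aux.index_mul (by omega) (by omega) hab]
      push_cast
      rw [iha (by omega), ihb (by omega),
        Nat.Coprime.primeFactors_mul hab, Finset.prod_union hab.disjoint_primeFactors]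
      ring
end

section
/- Every discrete subring with unit of ℂ is either ℤ or an imaginary quadratic order 𝒪_Δ = ℤ·((Δ+√Δ)/2) ⊕ ℤ for some negative integer Δ ≡ 0,1 mod 4. -/
open Complex

/-- Auxiliary: a sequence trapped in shrinking disjoint intervals is injective. -/
lemma aux_inj_of_ioo (g : ℕ → ℝ) (h : ∀ n : ℕ, g n ∈ Set.Ioo (1/((n:ℝ)+2)) (1/((n:ℝ)+1))) :
    Function.Injective g := by
  have key : ∀ m n : ℕ, m < n → g m ≠ g n := by
    intro m n hlt heq
    have h1 := (h m).1
    have h2 := (h n).2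
    have hle : (1:ℝ)/(n+1) ≤ 1/(m+2) := by
      apply one_div_le_one_div_of_le
      · positivity
      · have : (m:ℝ) + 1 ≤ n := by exact_mod_cast Nat.succ_le_of_lt hlt
        linarith
    linarith
  intro m n hmn
  by_contra hne
  rcases lt_or_gt_of_ne hne with h' | h'
  · exact key m n h' hmn
  · exact key n m h' hmn.symm

/-- The real elements of a subring of `ℂ`, as an additive subgroup of `ℝ`. -/
def realPartSubgroup (R : Subring ℂ) : AddSubgroup ℝ where
  carrier := {x : ℝ | (x : ℂ) ∈ R}
  zero_mem' := by
    simp only [Set.mem_setOf_eq, Complex.ofReal_zero]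
    exact zero_mem R
  add_mem' := by
    intro a b ha hb
    simp only [Set.mem_setOf_eq, Complex.ofReal_add] at *
    exact add_mem ha hb
  neg_mem' := by
    intro a ha
    simp only [Set.mem_setOf_eq, Complex.ofReal_neg] at *
    exact neg_mem ha

@[simp] lemma mem_realPartSubgroup {R : Subring ℂ} {x : ℝ} :
    x ∈ realPartSubgroup R ↔ (x : ℂ) ∈ R := Iff.rfl

/-- The imaginary parts of elements of a subring of `ℂ`, as an additive subgroup of `ℝ`. -/
def imPartSubgroup (R : Subring ℂ) : AddSubgroup ℝ where
  carrier := {y : ℝ | ∃ z ∈ (R : Set ℂ), z.im = y}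
  zero_mem' := ⟨0, zero_mem R, by simp⟩
  add_mem' := by
    rintro a b ⟨z, hz, rfl⟩ ⟨w, hw, rfl⟩
    exact ⟨z + w, add_mem hz hw, by simp⟩
  neg_mem' := by
    rintro a ⟨z, hz, rfl⟩
    exact ⟨-z, neg_mem hz, by simp⟩

@[simp] lemma mem_imPartSubgroup {R : Subring ℂ} {y : ℝ} :
    y ∈ imPartSubgroup R ↔ ∃ z ∈ (R : Set ℂ), z.im = y := Iff.rfl

/-- Every discrete subring with unit of `ℂ` is either `ℤ` or an imaginary quadratic order
`𝒪_Δ = ℤ·ω_Δ ⊕ ℤ` with `ω_Δ = (Δ + √Δ)/2`, for some `Δ < 0`, `Δ ≡ 0, 1 mod 4`. -/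
theorem discrete_subring_classification (R : Subring ℂ) [DiscreteTopology R] :
    (R : Set ℂ) = Set.range (Int.cast : ℤ → ℂ) ∨
      ∃ Δ : ℤ, Δ < 0 ∧ (Δ % 4 = 0 ∨ Δ % 4 = 1) ∧
        (R : Set ℂ) = {z : ℂ | ∃ m k : ℤ,
          z = (m : ℂ) * (((Δ : ℂ) + Complex.I * Real.sqrt |(Δ : ℝ)|) / 2) + (k : ℂ)} := by
  -- basic topology facts
  have hRd : DiscreteTopology ↥(R : Set ℂ) := ‹DiscreteTopology R›
  have hclosed : IsClosed (R : Set ℂ) := by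
    have hd : DiscreteTopology ↥(R.toAddSubgroup) := hRd
    have := AddSubgroup.isClosed_of_discrete (H := R.toAddSubgroup)
    simpa using this
  have hfin : ∀ K : Set ℂ, IsCompact K → ((R : Set ℂ) ∩ K).Finite := by
    intro K hK
    have hc : IsCompact ((R : Set ℂ) ∩ K) := hK.inter_left hclosed
    exact hc.finite (isDiscrete_iff_discreteTopology.mpr (DiscreteTopology.of_subset hRd Set.inter_subset_left))
  have hnoseq : ∀ f : ℕ → ℂ, (∀ n, f n ∈ R) → (∀ n, ‖f n‖ ≤ 2) →
      ¬ Function.Injective f := by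
    intro f hmem hb hinj
    have hinf : ((R : Set ℂ) ∩ Metric.closedBall 0 2).Infinite :=
      Set.infinite_of_injective_forall_mem hinj (fun n =>
        ⟨hmem n, by simpa [Metric.mem_closedBall, dist_eq_norm] using hb n⟩)
    exact hinf (hfin _ (isCompact_closedBall 0 2))
  -- every real element of R is an integer
  have hrealint : ∀ x : ℝ, (x : ℂ) ∈ R → ∃ n : ℤ, x = n := by
    rcases AddSubgroup.dense_or_cyclic (realPartSubgroup R) with hd | ⟨a, ha⟩
    · exfalso
      have pick : ∀ n : ℕ, ∃ x : ℝ, x ∈ realPartSubgroup R ∧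
          x ∈ Set.Ioo (1/((n:ℝ)+2)) (1/((n:ℝ)+1)) := by
        intro n
        have h : (1/((n:ℝ)+2)) < 1/((n:ℝ)+1) := by
          apply one_div_lt_one_div_of_lt
          · positivity
          · linarith
        obtain ⟨x, hx, hx2⟩ := hd.exists_between h
        exact ⟨x, hx, hx2⟩
      choose g hg1 hg2 using pick
      refine hnoseq (fun n => ((g n : ℝ) : ℂ)) (fun n => hg1 n) ?_ ?_
      · intro n
        have h0 : 0 < g n := lt_trans (by positivity) (hg2 n).1
        have h1 : g n < 1 := lt_of_lt_of_le (hg2 n).2 (by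
          rw [div_le_one (by positivity)]; linarith)
        simpa [Complex.norm_real, abs_of_pos h0] using le_of_lt (lt_trans h1 one_lt_two)
      · intro m n hmn
        exact aux_inj_of_ioo g hg2 (Complex.ofReal_injective (by simpa using hmn))
    · intro x hx
      have hxS : x ∈ AddSubgroup.closure ({a} : Set ℝ) := ha ▸ (mem_realPartSubgroup.mpr hx)
      have haS : a ∈ realPartSubgroup R := by
        rw [ha]; exact AddSubgroup.mem_closure_singleton.mpr ⟨1, one_zsmul a⟩
      have haaS : a * a ∈ AddSubgroup.closure ({a} : Set ℝ) := by
        rw [← ha]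
        simp only [mem_realPartSubgroup, Complex.ofReal_mul] at *
        exact mul_mem haS haS
      obtain ⟨m, hm⟩ := AddSubgroup.mem_closure_singleton.mp haaS
      obtain ⟨l, hl⟩ := AddSubgroup.mem_closure_singleton.mp hxS
      rw [zsmul_eq_mul] at hm hl
      by_cases ha0 : a = 0
      · exact ⟨0, by simp [← hl, ha0]⟩
      · have ham : a = (m : ℝ) := (mul_right_cancel₀ ha0 hm).symm
        exact ⟨l * m, by rw [← hl, ham]; push_cast; ring⟩
  -- classify by the subgroup of imaginary parts
  rcases AddSubgroup.dense_or_cyclic (imPartSubgroup R) with hd | ⟨a, ha⟩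
  · exfalso
    have pick : ∀ n : ℕ, ∃ y : ℝ, y ∈ imPartSubgroup R ∧
        y ∈ Set.Ioo (1/((n:ℝ)+2)) (1/((n:ℝ)+1)) := by
      intro n
      have h : (1/((n:ℝ)+2)) < 1/((n:ℝ)+1) := by
        apply one_div_lt_one_div_of_lt
        · positivity
        · linarith
      obtain ⟨y, hy, hy2⟩ := hd.exists_between h
      exact ⟨y, hy, hy2⟩
    choose g hg1 hg2 using pick
    have hz := fun n => mem_imPartSubgroup.mp (hg1 n)
    choose zs hzmem hzim using hz
    set f : ℕ → ℂ := fun n => zs n - ((⌊(zs n).re⌋ : ℤ) : ℂ) with hf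
    have hfmem : ∀ n, f n ∈ R := fun n => sub_mem (hzmem n) (intCast_mem R _)
    have hfim : ∀ n, (f n).im = g n := by
      intro n
      show (zs n - ((⌊(zs n).re⌋ : ℤ) : ℂ)).im = g n
      rw [Complex.sub_im, Complex.intCast_im, hzim n, sub_zero]
    have hfre : ∀ n, (f n).re = Int.fract (zs n).re := by
      intro n
      show (zs n - ((⌊(zs n).re⌋ : ℤ) : ℂ)).re = Int.fract (zs n).re
      rw [Complex.sub_re, Complex.intCast_re, Int.fract]
    refine hnoseq f hfmem ?_ ?_
    · intro n
      have h0 : 0 < g n := lt_trans (by positivity) (hg2 n).1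
      have h1 : g n < 1 := lt_of_lt_of_le (hg2 n).2 (by
        rw [div_le_one (by positivity)]; linarith)
      have hb1 : |(f n).re| ≤ 1 := by
        rw [hfre, _root_.abs_of_nonneg (Int.fract_nonneg ((zs n).re))]
        exact le_of_lt (Int.fract_lt_one ((zs n).re))
      have hb2 : |(f n).im| ≤ 1 := by
        rw [hfim, abs_of_pos h0]; exact le_of_lt h1
      calc ‖f n‖ ≤ |(f n).re| + |(f n).im| := Complex.norm_le_abs_re_add_abs_im _
        _ ≤ 2 := by linarith
    · intro m n hmn
      have : g m = g n := by rw [← hfim m, ← hfim n, hmn]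
      exact aux_inj_of_ioo g hg2 this
  · -- the imaginary parts form a cyclic group
    have hmem : ∀ y : ℝ, y ∈ imPartSubgroup R ↔ ∃ n : ℤ, y = n * a := by
      intro y
      rw [ha, AddSubgroup.mem_closure_singleton]
      constructor
      · rintro ⟨n, rfl⟩; exact ⟨n, zsmul_eq_mul a n⟩
      · rintro ⟨n, rfl⟩; exact ⟨n, zsmul_eq_mul a n⟩
    by_cases ha0 : a = 0
    · -- R consists of real numbers only, hence R = ℤ
      left
      ext z
      simp only [SetLike.mem_coe, Set.mem_range]
      constructor
      · intro hz
        obtain ⟨n, hn⟩ := (hmem z.im).mp ⟨z, hz, rfl⟩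
        have him : z.im = 0 := by rw [hn, ha0, mul_zero]
        have hzr : z = ((z.re : ℝ) : ℂ) := by
          apply Complex.ext
          · simp
          · simp [him]
        obtain ⟨l, hl⟩ := hrealint z.re (hzr ▸ hz)
        exact ⟨l, by rw [hzr, hl]; norm_cast⟩
      · rintro ⟨n, rfl⟩
        exact intCast_mem R n
    · -- imaginary quadratic order case
      right
      -- b : the least positive imaginary part
      set b : ℝ := |a| with hbdef
      have hb_pos : 0 < b := abs_pos.mpr ha0
      have haS : a ∈ imPartSubgroup R := by
        rw [ha]; exact AddSubgroup.mem_closure_singleton.mpr ⟨1, one_zsmul a⟩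
      have hbS : b ∈ imPartSubgroup R := by
        rcases abs_choice a with h | h
        · rw [hbdef, h]; exact haS
        · rw [hbdef, h]; exact neg_mem haS
      have hrep : ∀ y ∈ imPartSubgroup R, ∃ n : ℤ, y = n * b := by
        intro y hy
        obtain ⟨n, hn⟩ := (hmem y).mp hy
        rcases abs_choice a with h | h
        · exact ⟨n, by rw [hn, hbdef, h]⟩
        · exact ⟨-n, by rw [hn, hbdef, h]; push_cast; ring⟩
      obtain ⟨τ, hτR, hτim⟩ := mem_imPartSubgroup.mp hbS
      have hsqR : τ * τ ∈ R := mul_mem hτR hτR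
      obtain ⟨n, hn⟩ := hrep ((τ * τ).im) ⟨τ * τ, hsqR, rfl⟩
      have him2 : (τ * τ).im = 2 * τ.re * b := by
        simp [Complex.mul_im, hτim]; ring
      have hre_τ : τ.re = (n : ℝ) / 2 := by
        rw [him2] at hn
        have hb' : b ≠ 0 := ne_of_gt hb_pos
        field_simp
        nlinarith [hn]
      have hwmem : τ * τ - (n : ℂ) * τ ∈ R := sub_mem hsqR (mul_mem (intCast_mem R n) hτR)
      have hwim : (τ * τ - (n : ℂ) * τ).im = 0 := by
        simp [Complex.sub_im, Complex.mul_im, him2, hτim, hre_τ]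
        ring
      have hwreal : τ * τ - (n : ℂ) * τ = (((τ * τ - (n : ℂ) * τ).re : ℝ) : ℂ) := by
        apply Complex.ext
        · simp
        · simp [hwim]
      obtain ⟨k, hk⟩ := hrealint _ (hwreal ▸ hwmem)
      have hτsq : τ * τ = (n : ℂ) * τ + (k : ℂ) := by
        have hsub : τ * τ - (n : ℂ) * τ = (k : ℂ) := by
          rw [hwreal, hk]; push_cast; ring
        exact sub_eq_iff_eq_add'.mp hsub
      set Δ : ℤ := n ^ 2 + 4 * k with hΔdef
      have hre_eq : τ.re * τ.re - τ.im * τ.im = (n : ℝ) * τ.re + (k : ℝ) := by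
        have := congrArg Complex.re hτsq
        simpa [Complex.mul_re, Complex.add_re, Complex.intCast_re, Complex.intCast_im]
          using this
      have hΔr : (Δ : ℝ) = -(4 * b ^ 2) := by
        rw [hΔdef]
        push_cast
        rw [hτim, hre_τ] at hre_eq
        nlinarith [hre_eq]
      have hΔneg : Δ < 0 := by
        have : (Δ : ℝ) < 0 := by nlinarith [hb_pos]
        exact_mod_cast this
      have hmod : Δ % 4 = 0 ∨ Δ % 4 = 1 := by
        rcases Int.even_or_odd n with ⟨m, hm⟩ | ⟨m, hm⟩
        · left
          have h4 : Δ = 4 * (m * m + k) := by rw [hΔdef, hm]; ring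
          omega
        · right
          have h4 : Δ = 4 * (m * m + m + k) + 1 := by rw [hΔdef, hm]; ring
          omega
      have hsqrt : Real.sqrt |(Δ : ℝ)| = 2 * b := by
        have habs : |(Δ : ℝ)| = (2 * b) ^ 2 := by
          rw [abs_of_nonpos (by nlinarith [hb_pos] : (Δ : ℝ) ≤ 0), hΔr]; ring
        rw [habs]
        exact Real.sqrt_sq (by positivity)
      have hpar : ∃ c : ℤ, Δ - n = 2 * c := by
        obtain ⟨t, ht⟩ := Int.even_mul_succ_self (n - 1)
        exact ⟨t + 2 * k, by rw [hΔdef]; linear_combination ht⟩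
      obtain ⟨c, hc⟩ := hpar
      refine ⟨Δ, hΔneg, hmod, ?_⟩
      have hτ_eq : τ = (n : ℂ) / 2 + (b : ℂ) * Complex.I := by
        conv_lhs => rw [← Complex.re_add_im τ]
        rw [hre_τ, hτim]
        push_cast
        ring
      have hω : ((Δ : ℂ) + Complex.I * (Real.sqrt |(Δ : ℝ)| : ℝ)) / 2 = τ + (c : ℂ) := by
        rw [hsqrt, hτ_eq]
        have hc' : (Δ : ℂ) - (n : ℂ) = 2 * (c : ℂ) := by exact_mod_cast hc
        push_cast
        linear_combination hc' / 2
      ext z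
      simp only [SetLike.mem_coe, Set.mem_setOf_eq]
      constructor
      · intro hz
        obtain ⟨m, hm'⟩ := hrep z.im ⟨z, hz, rfl⟩
        have hw2 : z - (m : ℂ) * τ ∈ R := sub_mem hz (mul_mem (intCast_mem R m) hτR)
        have hw2im : (z - (m : ℂ) * τ).im = 0 := by
          simp [Complex.sub_im, Complex.mul_im, hτim]
          rw [hm']
          ring
        have hw2real : z - (m : ℂ) * τ = (((z - (m : ℂ) * τ).re : ℝ) : ℂ) := by
          apply Complex.ext
          · simp
          · simp [hw2im]
        obtain ⟨k', hk'⟩ := hrealint _ (hw2real ▸ hw2)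
        refine ⟨m, k' - m * c, ?_⟩
        rw [hω]
        have hz2 : z - (m : ℂ) * τ = (k' : ℂ) := by
          rw [hw2real, hk']; push_cast; ring
        push_cast
        linear_combination hz2
      · rintro ⟨m, k', rfl⟩
        rw [hω]
        exact add_mem (mul_mem (intCast_mem R m) (add_mem hτR (intCast_mem R c)))
          (intCast_mem R k')
end
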